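/- arXiv:1606.03872 — 4 statements merged into one kernel-verified Lean document; each statement's English description precedes it below -/
import Mathlib

section
/- For every integer n with 2 ≤ k ≤ n, the generalized k-connectivity of the complete graph K_n equals n − ⌈k/2⌉. -/
/-!
For a `k`-set `S` in `K_n`, every outside vertex `c` gives the star joining `c` to `S`, and `K_S`
splits into `⌊k/2⌋` edge-disjoint Hamiltonian paths; together these are `n - ⌈k/2⌉` internally
disjoint `S`-trees. Conversely, an `S`-tree that leaves `S` owns a vertex outside `S`, so there
are at most `n - k` of those; every other `S`-tree spans exactly `S`, hence uses `k - 1` of the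
`k.choose 2` edges of `K_S`, so there are at most `k / 2` of them.
-/

open SimpleGraph

def IsSTree {V : Type*} (G : SimpleGraph V) (S : Set V) (T : G.Subgraph) : Prop :=
  T.coe.IsTree ∧ S ⊆ T.verts

def InternallyDisjoint {V ι : Type*} {G : SimpleGraph V} (S : Set V)
    (T : ι → G.Subgraph) : Prop :=
  ∀ i j, i ≠ j → (T i).edgeSet ∩ (T j).edgeSet = ∅ ∧ (T i).verts ∩ (T j).verts = S

def HasSTrees {V : Type*} (G : SimpleGraph V) (S : Set V) (ℓ : ℕ) : Prop :=
  ∃ T : Fin ℓ → G.Subgraph, (∀ i, IsSTree G S (T i)) ∧ InternallyDisjoint S T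

open Finset

namespace SimpleGraph

variable {V α : Type*} {G : SimpleGraph V}

lemma Subgraph.ncard_edgeSet_add_one [Finite V] {H : G.Subgraph} (h : H.coe.IsTree) :
    H.edgeSet.ncard + 1 = H.verts.ncard := by
  rw [← Subgraph.image_coe_edgeSet_coe,
    Set.ncard_image_of_injective _ (Sym2.map.injective Subtype.val_injective),
    ← Nat.card_coe_set_eq, ← Nat.card_coe_set_eq]
  exact (isTree_iff_connected_and_card.mp h).2

lemma Subgraph.edgeSet_inter_eq_empty_of_mem {H₁ H₂ : G.Subgraph} {c : V}
    (h₁ : ∀ e ∈ H₁.edgeSet, c ∈ e) (h₂ : c ∉ H₂.verts) : H₁.edgeSet ∩ H₂.edgeSet = ∅ :=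
  Set.eq_empty_of_forall_notMem fun _ he => h₂ (H₂.mem_verts_of_mem_edge he.2 (h₁ _ he.1))

lemma isAcyclic_pathGraph (n : ℕ) : (pathGraph n).IsAcyclic := by
  refine isAcyclic_iff_forall_adj_isBridge.mpr fun u v huv => ?_
  wlog h : u.val + 1 = v.val generalizing u v
  · rw [Sym2.eq_swap]
    exact this v u huv.symm (by rw [pathGraph_adj] at huv; omega)
  refine isBridge_iff_forall_walk_mem_edges.mpr fun p => ?_
  -- a walk from `u` to `v = u + 1` has to cross from `{x ≤ u}` to its complement
  obtain ⟨d, hd, hd₁, hd₂⟩ :=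
    p.exists_boundary_dart {x | x.val ≤ u.val} (by simp) (by simp; omega)
  have hadj := pathGraph_adj.mp d.adj
  simp only [Set.mem_ofPred_eq] at hd₁ hd₂
  have hdu : d.edge = s(u, v) := by
    rw [Dart.edge, Fin.ext (by omega : d.fst.val = u), Fin.ext (by omega : d.snd.val = v)]
  rw [← hdu, p.edges_eq_map_darts]
  exact List.mem_map_of_mem hd

lemma isTree_pathGraph (n : ℕ) : (pathGraph (n + 1)).IsTree :=
  ⟨pathGraph_connected n, isAcyclic_pathGraph _⟩

def Copy.intoTop (A : SimpleGraph α) (f : α ↪ V) : Copy A (⊤ : SimpleGraph V) :=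
  ⟨⟨f, fun h => f.injective.ne h.ne⟩, f.injective⟩

@[simp] lemma Copy.coe_intoTop (A : SimpleGraph α) (f : α ↪ V) : ⇑(Copy.intoTop A f) = f := rfl

variable {A : SimpleGraph α}

lemma Copy.verts_toSubgraph (f : Copy A G) : f.toSubgraph.verts = Set.range f := by
  simp

lemma Copy.edgeSet_toSubgraph (f : Copy A G) :
    f.toSubgraph.edgeSet = Sym2.map f '' A.edgeSet := by
  simp

lemma Copy.isTree_coe_toSubgraph (f : Copy A G) (hA : A.IsTree) : f.toSubgraph.coe.IsTree :=
  f.isoToSubgraph.isTree_iff.mp hA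

def starSubgraph (S : Set V) (c : V) : (⊤ : SimpleGraph V).Subgraph :=
  (Copy.intoTop (starGraph (⟨c, S.mem_insert c⟩ : ↥(insert c S)))
    (Function.Embedding.subtype _)).toSubgraph

section Star

variable {S : Set V} {c : V}

lemma verts_starSubgraph : (starSubgraph S c).verts = insert c S := by
  rw [starSubgraph, Copy.verts_toSubgraph, Copy.coe_intoTop, Function.Embedding.coe_subtype,
    Subtype.range_coe]

lemma isSTree_starSubgraph : IsSTree ⊤ S (starSubgraph S c) :=
  ⟨Copy.isTree_coe_toSubgraph _ (isTree_starGraph _), verts_starSubgraph ▸ Set.subset_insert c S⟩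

lemma mem_of_mem_edgeSet_starSubgraph {e : Sym2 V} (he : e ∈ (starSubgraph S c).edgeSet) :
    c ∈ e := by
  rw [starSubgraph, Copy.edgeSet_toSubgraph] at he
  obtain ⟨⟨⟨a, _⟩, ⟨b, _⟩⟩, hab, rfl⟩ := he
  rw [mem_edgeSet, starGraph_adj] at hab
  aesop

end Star

lemma internallyDisjoint_starSubgraph (S : Set V) :
    InternallyDisjoint S fun c : ↥Sᶜ => starSubgraph S c := by
  rintro ⟨c, hc⟩ ⟨c', hc'⟩ hcc'
  have hne : c ≠ c' := fun h => hcc' (Subtype.ext h)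
  refine ⟨Subgraph.edgeSet_inter_eq_empty_of_mem (fun _ => mem_of_mem_edgeSet_starSubgraph) ?_, ?_⟩
  · rw [verts_starSubgraph]
    rintro (h | h)
    exacts [hne h, hc h]
  · dsimp only
    rw [verts_starSubgraph, verts_starSubgraph]
    ext x
    simp only [Set.mem_inter_iff, Set.mem_insert_iff]
    constructor
    · rintro ⟨rfl | h, rfl | h'⟩
      exacts [absurd rfl hne, absurd h' hc, h, h]
    · exact fun h => ⟨Or.inr h, Or.inr h⟩

end SimpleGraph

/-- The offsets `0, 1, -1, 2, -2, …`: the path `i + zigzag 0, i + zigzag 1, …` in `ZMod k` joins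
consecutive vertices whose sum is `2 * i` or `2 * i + 1`, which makes the paths with
`2 * i + 1 < k` edge-disjoint. -/
def zigzag (j : ℕ) : ℤ := if j % 2 = 0 then -(j / 2 : ℤ) else (j + 1) / 2

lemma zigzag_add_zigzag_succ (j : ℕ) : zigzag j + zigzag (j + 1) = ((j + 1) % 2 : ℕ) := by
  unfold zigzag; split_ifs <;> omega

lemma zigzag_injective : Function.Injective zigzag := by
  intro a b h; unfold zigzag at h; split_ifs at h <;> omega

lemma abs_zigzag_sub_zigzag_lt {k a b : ℕ} (ha : a < k) (hb : b < k) :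
    |zigzag a - zigzag b| < k := by
  rw [abs_sub_lt_iff]; unfold zigzag; split_ifs <;> omega

lemma zigzag_cast_injOn (k : ℕ) : Set.InjOn (fun j => (zigzag j : ZMod k)) (Set.Iio k) := by
  intro a ha b hb h
  rw [ZMod.intCast_eq_intCast_iff_dvd_sub] at h
  have := Int.eq_zero_of_abs_lt_dvd h (by rw [abs_sub_comm]; exact abs_zigzag_sub_zigzag_lt ha hb)
  exact zigzag_injective (by omega)

section ZigzagEmbedding

variable {k : ℕ}

def zigzagEmbedding (i : ZMod k) : Fin k ↪ ZMod k :=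
  ⟨fun j => i + zigzag j,
    fun a b h => Fin.ext (zigzag_cast_injOn k a.isLt b.isLt (add_left_cancel h))⟩

lemma zigzagEmbedding_apply (i : ZMod k) (j : Fin k) : zigzagEmbedding i j = i + zigzag j := rfl

lemma zigzagEmbedding_surjective [NeZero k] (i : ZMod k) :
    Function.Surjective (zigzagEmbedding i) :=
  ((Fintype.bijective_iff_injective_and_card _).mpr
    ⟨(zigzagEmbedding i).injective, by simp⟩).surjective

end ZigzagEmbedding

namespace SimpleGraph

variable {V : Type*} {k : ℕ}

lemma exists_add_zigzagEmbedding_of_adj {i : ZMod k} {a b : Fin k}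
    (h : (pathGraph k).Adj a b) :
    ∃ c < 2, zigzagEmbedding i a + zigzagEmbedding i b = 2 * i + (c : ℕ) := by
  wlog hab : a.val + 1 = b.val generalizing a b
  · rw [add_comm]
    exact this h.symm (by rw [pathGraph_adj] at h; omega)
  refine ⟨(a.val + 1) % 2, Nat.mod_lt _ two_pos, ?_⟩
  rw [zigzagEmbedding_apply, zigzagEmbedding_apply, ← hab, add_add_add_comm, ← Int.cast_add,
    zigzag_add_zigzag_succ, Int.cast_natCast, two_mul]

def zigzagSubgraph (e : ZMod k ↪ V) (i : ZMod k) : (⊤ : SimpleGraph V).Subgraph :=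
  (Copy.intoTop (pathGraph k) ((zigzagEmbedding i).trans e)).toSubgraph

section Zigzag

variable (e : ZMod k ↪ V)

lemma verts_zigzagSubgraph [NeZero k] (i : ZMod k) : (zigzagSubgraph e i).verts = Set.range e := by
  rw [zigzagSubgraph, Copy.verts_toSubgraph, Copy.coe_intoTop, Function.Embedding.coe_trans,
    (zigzagEmbedding_surjective i).range_comp]

lemma isTree_coe_zigzagSubgraph [NeZero k] (i : ZMod k) : (zigzagSubgraph e i).coe.IsTree := by
  obtain ⟨m, rfl⟩ := Nat.exists_eq_succ_of_ne_zero (NeZero.ne k)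
  exact Copy.isTree_coe_toSubgraph _ (isTree_pathGraph m)

lemma exists_of_mem_edgeSet_zigzagSubgraph {i : ZMod k} {d : Sym2 V}
    (hd : d ∈ (zigzagSubgraph e i).edgeSet) :
    ∃ x y, d = s(e x, e y) ∧ ∃ c < 2, x + y = 2 * i + (c : ℕ) := by
  rw [zigzagSubgraph, Copy.edgeSet_toSubgraph] at hd
  obtain ⟨⟨a, b⟩, hab, rfl⟩ := hd
  exact ⟨_, _, rfl, exists_add_zigzagEmbedding_of_adj hab⟩

lemma edgeSet_zigzagSubgraph_inter_eq_empty {i j : ℕ} (hi : 2 * i + 1 < k) (hj : 2 * j + 1 < k)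
    (hij : i ≠ j) : (zigzagSubgraph e i).edgeSet ∩ (zigzagSubgraph e j).edgeSet = ∅ := by
  refine Set.eq_empty_of_forall_notMem fun d ⟨hdi, hdj⟩ => hij ?_
  obtain ⟨x, y, rfl, c, hc, hxy⟩ := exists_of_mem_edgeSet_zigzagSubgraph e hdi
  obtain ⟨x', y', hd, c', hc', hxy'⟩ := exists_of_mem_edgeSet_zigzagSubgraph e hdj
  have hsum : x + y = x' + y' := by
    rcases Sym2.eq_iff.mp hd with ⟨hx, hy⟩ | ⟨hx, hy⟩ <;>
      simp only [e.injective hx, e.injective hy, add_comm]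
  rw [hxy, hxy'] at hsum
  have := (ZMod.natCast_eq_natCast_iff' (2 * i + c) (2 * j + c') k).mp (by push_cast; exact hsum)
  rw [Nat.mod_eq_of_lt (by omega), Nat.mod_eq_of_lt (by omega)] at this
  omega

lemma internallyDisjoint_zigzagSubgraph [NeZero k] :
    InternallyDisjoint (Set.range e) fun i : Fin (k / 2) => zigzagSubgraph e (i : ℕ) := by
  intro i j hij
  refine ⟨edgeSet_zigzagSubgraph_inter_eq_empty e (by omega) (by omega)
    (Fin.val_injective.ne hij), ?_⟩
  rw [verts_zigzagSubgraph, verts_zigzagSubgraph, Set.inter_self]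

lemma starSubgraph_zigzagSubgraph_disjoint [NeZero k] {S : Set V} (he : Set.range e = S) {c : V}
    (hc : c ∉ S) (i : ZMod k) :
    (starSubgraph S c).edgeSet ∩ (zigzagSubgraph e i).edgeSet = ∅ ∧
      (starSubgraph S c).verts ∩ (zigzagSubgraph e i).verts = S := by
  rw [verts_zigzagSubgraph, he]
  refine ⟨Subgraph.edgeSet_inter_eq_empty_of_mem (fun _ => mem_of_mem_edgeSet_starSubgraph)
    (by rwa [verts_zigzagSubgraph, he]), ?_⟩
  rw [verts_starSubgraph, Set.insert_inter_of_notMem hc, Set.inter_self]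

end Zigzag

end SimpleGraph

section Families

variable {V ι κ : Type*} {G : SimpleGraph V} {S : Set V}

lemma hasSTrees_of_fintype [Fintype ι] {T : ι → G.Subgraph} (hT : ∀ i, IsSTree G S (T i))
    (hd : InternallyDisjoint S T) : HasSTrees G S (Fintype.card ι) :=
  ⟨T ∘ (Fintype.equivFin ι).symm, fun _ => hT _,
    fun _ _ hij => hd _ _ ((Fintype.equivFin ι).symm.injective.ne hij)⟩

lemma InternallyDisjoint.sum_elim {T₁ : ι → G.Subgraph} {T₂ : κ → G.Subgraph}
    (h₁ : InternallyDisjoint S T₁) (h₂ : InternallyDisjoint S T₂)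
    (h₁₂ : ∀ i j, (T₁ i).edgeSet ∩ (T₂ j).edgeSet = ∅ ∧ (T₁ i).verts ∩ (T₂ j).verts = S) :
    InternallyDisjoint S (Sum.elim T₁ T₂) := by
  rintro (i | i) (j | j) hij
  · exact h₁ i j (fun h => hij (congrArg _ h))
  · exact h₁₂ i j
  · rw [Sum.elim_inr, Sum.elim_inl, Set.inter_comm, Set.inter_comm (T₂ i).verts]
    exact h₁₂ j i
  · exact h₂ i j (fun h => hij (congrArg _ h))

end Families

theorem hasSTrees_top {V : Type*} [Fintype V] (S : Finset V) (hS : S.Nonempty) :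
    HasSTrees (⊤ : SimpleGraph V) S (Fintype.card V - #S + #S / 2) := by
  classical
  have : NeZero #S := ⟨hS.card_pos.ne'⟩
  let e : ZMod #S ↪ V :=
    ((ZMod.finEquiv #S).symm.toEquiv.trans S.equivFin.symm).toEmbedding.trans (.subtype _)
  have he : Set.range e = S := by
    rw [Function.Embedding.coe_trans, Equiv.coe_toEmbedding, (Equiv.surjective _).range_comp,
      Function.Embedding.coe_subtype, Subtype.range_coe]
  have hcard : Fintype.card (↥(S : Set V)ᶜ ⊕ Fin (#S / 2)) = Fintype.card V - #S + #S / 2 := by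
    rw [Fintype.card_sum, Fintype.card_fin, ← Set.toFinset_card, Set.toFinset_compl,
      Finset.toFinset_coe, card_compl]
  rw [← hcard]
  refine hasSTrees_of_fintype (T := Sum.elim (fun c : ↥(S : Set V)ᶜ => starSubgraph S c)
    fun i : Fin (#S / 2) => zigzagSubgraph e (i : ℕ)) ?_ ?_
  · rintro (c | i)
    · exact isSTree_starSubgraph
    · exact ⟨isTree_coe_zigzagSubgraph e _, ((verts_zigzagSubgraph e _).trans he).symm.subset⟩
  · exact (internallyDisjoint_starSubgraph _).sum_elim (he ▸ internallyDisjoint_zigzagSubgraph e)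
      fun c _ => starSubgraph_zigzagSubgraph_disjoint e he c.2 _

section UpperBound

variable {V ι : Type*} [Fintype V] {G : SimpleGraph V} {S : Finset V} {T : ι → G.Subgraph}

lemma card_le_card_compl_of_verts_ne [DecidableEq V] (J : Finset ι)
    (hJ : ∀ i ∈ J, (S : Set V) ⊆ (T i).verts ∧ (T i).verts ≠ S)
    (hd : InternallyDisjoint (S : Set V) T) : #J ≤ #Sᶜ := by
  refine card_le_card_of_forall_subsingleton (fun i v => v ∈ (T i).verts) (fun i hi => ?_)
    fun v hv i hi j hj => by_contra fun hij => ?_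
  · obtain ⟨v, hv, hvS⟩ := Set.exists_of_ssubset ((hJ i hi).1.ssubset_of_ne (hJ i hi).2.symm)
    exact ⟨v, mem_compl.mpr hvS, hv⟩
  · have hvS : v ∈ (T i).verts ∩ (T j).verts := ⟨hi.2, hj.2⟩
    rw [(hd i j hij).2] at hvS
    exact mem_compl.mp hv hvS

lemma card_mul_le_choose_two_of_verts_eq (J : Finset ι)
    (hJ : ∀ i ∈ J, (T i).coe.IsTree ∧ (T i).verts = S)
    (hd : InternallyDisjoint (S : Set V) T) : #J * (#S - 1) ≤ (#S).choose 2 := by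
  classical
  rw [← Sym2.card_image_offDiag, ← mul_one #(S.offDiag.image _)]
  refine card_mul_le_card_mul (fun i e => e ∈ (T i).edgeSet) (fun i hi => ?_)
    fun e _ => card_le_one.mpr fun i hi j hj => by_contra fun hij => ?_
  · have hsub : (T i).edgeSet ⊆ S.offDiag.image Sym2.mk.uncurry := by
      rintro ⟨a, b⟩ hab
      have ha := (T i).edge_vert hab
      have hb := (T i).edge_vert hab.symm
      rw [(hJ i hi).2] at ha hb
      exact mem_image.mpr ⟨(a, b), mem_offDiag.mpr ⟨ha, hb, ((T i).adj_sub hab).ne⟩, rfl⟩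
    have hcoe : ((S.offDiag.image Sym2.mk.uncurry).bipartiteAbove
        (fun i e => e ∈ (T i).edgeSet) i : Set (Sym2 V)) = (T i).edgeSet := by
      rw [coe_bipartiteAbove]
      exact Set.inter_eq_right.mpr hsub
    have htree := Subgraph.ncard_edgeSet_add_one (hJ i hi).1
    rw [(hJ i hi).2, Set.ncard_coe_finset, ← hcoe, Set.ncard_coe_finset] at htree
    omega
  · have he : e ∈ (T i).edgeSet ∩ (T j).edgeSet :=
      ⟨((mem_bipartiteBelow _).mp hi).2, ((mem_bipartiteBelow _).mp hj).2⟩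
    rw [(hd i j hij).1] at he
    exact he

theorem InternallyDisjoint.card_le [Fintype ι] (hd : InternallyDisjoint (S : Set V) T)
    (hT : ∀ i, IsSTree G S (T i)) (hS : 2 ≤ #S) :
    Fintype.card ι ≤ Fintype.card V - #S + #S / 2 := by
  classical
  let J : Finset ι := {i | (T i).verts = S}
  have hout : #Jᶜ ≤ #Sᶜ :=
    card_le_card_compl_of_verts_ne _ (fun i hi => ⟨(hT i).2, by simpa [J] using hi⟩) hd
  have hin : #J * (#S - 1) ≤ (#S).choose 2 :=
    card_mul_le_choose_two_of_verts_eq _ (fun i hi => ⟨(hT i).1, by simpa [J] using hi⟩) hd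
  have hin' : #J ≤ #S / 2 := by
    rw [Nat.choose_two_right, Nat.le_div_iff_mul_le two_pos] at hin
    rw [Nat.le_div_iff_mul_le two_pos]
    exact Nat.le_of_mul_le_mul_right (by linarith) (by omega : 0 < #S - 1)
  rw [← card_add_card_compl J]
  rw [card_compl S] at hout
  omega

lemma HasSTrees.le {ℓ : ℕ} (h : HasSTrees G S ℓ) (hS : 2 ≤ #S) :
    ℓ ≤ Fintype.card V - #S + #S / 2 := by
  obtain ⟨T, hT, hd⟩ := h
  simpa using hd.card_le hT hS

end UpperBound

/-- The generalized `k`-connectivity of the complete graph `K_n` equals `n - ⌈k/2⌉`: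
every `k`-set of vertices admits `n - ⌈k/2⌉` internally disjoint `S`-trees, and some
`k`-set admits no more. -/
theorem generalized_connectivity_complete (n k : ℕ) (hk2 : 2 ≤ k) (hkn : k ≤ n) :
    (∀ S : Finset (Fin n), S.card = k →
        HasSTrees (⊤ : SimpleGraph (Fin n)) (S : Set (Fin n)) (n - (k + 1) / 2)) ∧
    (∃ S : Finset (Fin n), S.card = k ∧
        ¬ HasSTrees (⊤ : SimpleGraph (Fin n)) (S : Set (Fin n)) (n - (k + 1) / 2 + 1)) := by
  have hcount : n - (k + 1) / 2 = Fintype.card (Fin n) - k + k / 2 := by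
    rw [Fintype.card_fin]; omega
  refine ⟨fun S hS => ?_, ?_⟩
  · rw [hcount, ← hS]
    exact hasSTrees_top S (card_pos.mp (by omega))
  · obtain ⟨S, -, hS⟩ := exists_subset_card_eq (s := (univ : Finset (Fin n))) (by simpa using hkn)
    refine ⟨S, hS, fun h => ?_⟩
    have := h.le (by omega)
    omega
end

section
/- For every even integer n ≥ 2, the edge set of K_n can be partitioned into n/2 Hamiltonian paths. -/
/-!
Identify the vertices with `ZMod (2 * m)` and let the `i`-th graph join distinct `x, y` whenever
`x + y ∈ {2i, 2i + 1}`. For `i = 0` this is the zigzag path `0, 1, -1, 2, -2, …, m`, whose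
consecutive terms sum alternately to `1` and `0`; the `i`-th graph is its translate by `i`, hence
again a Hamiltonian path. An edge `{x, y}` lies in the `i`-th path exactly when
`i = (x + y).val / 2`, so the paths for `i < m` partition the edges.
-/

open SimpleGraph

/-- `H` is a Hamiltonian path subgraph: it is spanning, and for some ordering of all the
vertices its edges are exactly the consecutive pairs. -/
def IsHamiltonianPathSubgraph {n : ℕ} (H : (⊤ : SimpleGraph (Fin n)).Subgraph) : Prop :=
  H.verts = Set.univ ∧ ∃ f : Fin n ≃ Fin n, ∀ u v, H.Adj u v ↔
    ∃ i j : Fin n, (i : ℕ) + 1 = (j : ℕ) ∧ ((f i = u ∧ f j = v) ∨ (f i = v ∧ f j = u))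

namespace HamiltonianPathDecomposition

def zigzag (j : ℕ) : ℤ := if j % 2 = 0 then -((j : ℤ) / 2) else (j : ℤ) / 2 + 1

lemma zigzag_injective : Function.Injective zigzag := by
  intro a b h
  unfold zigzag at h
  split_ifs at h <;> omega

lemma zigzag_mem_Ioc {m j : ℕ} (hj : j < 2 * m) : zigzag j ∈ Set.Ioc (-(m : ℤ)) m := by
  unfold zigzag
  split_ifs <;> constructor <;> omega

lemma zigzag_add_zigzag_succ (j : ℕ) :
    zigzag j + zigzag (j + 1) = 0 ∨ zigzag j + zigzag (j + 1) = 1 := by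
  unfold zigzag
  split_ifs <;> omega

lemma succ_eq_or_eq_succ_of_zigzag_add {a b : ℕ} (hab : a ≠ b)
    (h : zigzag a + zigzag b = 0 ∨ zigzag a + zigzag b = 1) : a + 1 = b ∨ b + 1 = a := by
  unfold zigzag at h
  split_ifs at h <;> omega

lemma eq_of_intCast_zmod_eq {n : ℕ} {a b : ℤ} (h : (a : ZMod n) = b) (hab : a - b < n)
    (hba : b - a < n) : a = b := by
  rw [ZMod.intCast_eq_intCast_iff_dvd_sub] at h
  have := Int.eq_zero_of_abs_lt_dvd h (abs_sub_lt_iff.2 ⟨hba, hab⟩)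
  omega

lemma zigzag_cast_injective (m : ℕ) :
    Function.Injective fun j : Fin (2 * m) => (zigzag j : ZMod (2 * m)) := by
  intro a b h
  have ha := zigzag_mem_Ioc a.isLt
  have hb := zigzag_mem_Ioc b.isLt
  simp only [Set.mem_Ioc] at ha hb
  exact Fin.ext (zigzag_injective
    (eq_of_intCast_zmod_eq h (by push_cast; omega) (by push_cast; omega)))

def sumGraph (n : ℕ) (i : ZMod n) : SimpleGraph (ZMod n) where
  Adj x y := x ≠ y ∧ (x + y = 2 * i ∨ x + y = 2 * i + 1)
  symm := ⟨fun _ _ h => ⟨h.1.symm, by rw [add_comm]; exact h.2⟩⟩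
  loopless := ⟨fun _ h => h.1 rfl⟩

lemma sumGraph_adj {n : ℕ} {i x y : ZMod n} :
    (sumGraph n i).Adj x y ↔ x ≠ y ∧ (x + y = 2 * i ∨ x + y = 2 * i + 1) := Iff.rfl

lemma sumGraph_adj_add_add {n : ℕ} (i x y : ZMod n) :
    (sumGraph n i).Adj (i + x) (i + y) ↔ (sumGraph n 0).Adj x y := by
  have h : i + x + (i + y) = 2 * i + (x + y) := by ring
  simp only [sumGraph_adj, h, ne_eq, add_right_inj, add_eq_left, mul_zero, zero_add]

lemma sumGraph_zero_adj_zigzag {m : ℕ} (a b : Fin (2 * m)) :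
    (sumGraph (2 * m) 0).Adj (zigzag a) (zigzag b) ↔ (a : ℕ) + 1 = b ∨ (b : ℕ) + 1 = a := by
  have ha := zigzag_mem_Ioc a.isLt
  have hb := zigzag_mem_Ioc b.isLt
  simp only [Set.mem_Ioc] at ha hb
  simp only [sumGraph_adj, mul_zero, zero_add, ← Int.cast_add]
  constructor
  · rintro ⟨hne, hsum⟩
    have hab : (a : ℕ) ≠ b := fun h => hne (by rw [Fin.ext h])
    -- both sums lie in `(-2m, 2m)`: the terms lie in `(-m, m]` and are distinct
    have hz : zigzag a ≠ zigzag b := fun h => hab (zigzag_injective h)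
    refine succ_eq_or_eq_succ_of_zigzag_add hab (hsum.imp (fun h => ?_) (fun h => ?_))
    · exact eq_of_intCast_zmod_eq (b := 0) (by simpa using h) (by push_cast; omega)
        (by push_cast; omega)
    · exact eq_of_intCast_zmod_eq (b := 1) (by simpa using h) (by push_cast; omega)
        (by push_cast; omega)
  · intro h
    refine ⟨fun he => ?_, ?_⟩
    · have := zigzag_cast_injective m he
      omega
    · obtain ⟨j, k, hjk, hsum⟩ : ∃ j k : Fin (2 * m), (j : ℕ) + 1 = k ∧
          (zigzag a + zigzag b : ZMod (2 * m)) = zigzag j + zigzag k := by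
        rcases h with h | h
        · exact ⟨a, b, h, rfl⟩
        · exact ⟨b, a, h, add_comm _ _⟩
      rw [Int.cast_add, hsum, ← Int.cast_add, ← hjk]
      rcases zigzag_add_zigzag_succ j with h | h <;> simp [h]

lemma isHamiltonianPathSubgraph_toSubgraph {n : ℕ} {G : SimpleGraph (Fin n)} (f : Fin n ≃ Fin n)
    (h : ∀ a b, G.Adj (f a) (f b) ↔ (a : ℕ) + 1 = b ∨ (b : ℕ) + 1 = a) :
    IsHamiltonianPathSubgraph (toSubgraph G le_top) := by
  refine ⟨rfl, f, fun u v => ?_⟩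
  obtain ⟨a, rfl⟩ := f.surjective u
  obtain ⟨b, rfl⟩ := f.surjective v
  change G.Adj (f a) (f b) ↔ _
  simp only [h, f.apply_eq_iff_eq]
  constructor
  · rintro (h | h)
    exacts [⟨a, b, h, Or.inl ⟨rfl, rfl⟩⟩, ⟨b, a, h, Or.inr ⟨rfl, rfl⟩⟩]
  · rintro ⟨i, j, hij, ⟨rfl, rfl⟩ | ⟨rfl, rfl⟩⟩
    exacts [Or.inl hij, Or.inr hij]

variable (m : ℕ) [NeZero m]

noncomputable def zigzagEquiv : Fin (2 * m) ≃ ZMod (2 * m) :=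
  Equiv.ofBijective _
    ((Fintype.bijective_iff_injective_and_card _).2 ⟨zigzag_cast_injective m, by simp⟩)

noncomputable def sumSubgraph (i : ZMod (2 * m)) : (⊤ : SimpleGraph (Fin (2 * m))).Subgraph :=
  toSubgraph ((sumGraph (2 * m) i).comap (ZMod.finEquiv (2 * m))) le_top

lemma isHamiltonianPathSubgraph_sumSubgraph (i : ZMod (2 * m)) :
    IsHamiltonianPathSubgraph (sumSubgraph m i) := by
  let e := (ZMod.finEquiv (2 * m)).toEquiv
  refine isHamiltonianPathSubgraph_toSubgraph
    (((zigzagEquiv m).trans (Equiv.addLeft i)).trans e.symm) fun a b => ?_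
  change (sumGraph (2 * m) i).Adj (e (e.symm _)) (e (e.symm _)) ↔ _
  simp only [Equiv.apply_symm_apply, Equiv.trans_apply, Equiv.coe_addLeft]
  exact (sumGraph_adj_add_add _ _ _).trans (sumGraph_zero_adj_zigzag a b)

variable {m}

lemma eq_two_mul_or_eq_two_mul_add_one_iff (σ : ZMod (2 * m)) {k : ℕ} (hk : k < m) :
    (σ = 2 * (k : ZMod (2 * m)) ∨ σ = 2 * k + 1) ↔ σ.val / 2 = k := by
  have h2k : 2 * (k : ZMod (2 * m)) = ((2 * k : ℕ) : ZMod (2 * m)) := by push_cast; rfl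
  constructor
  · rintro (rfl | rfl)
    · rw [h2k, ZMod.val_cast_of_lt (by omega)]
      omega
    · rw [h2k, ← Nat.cast_succ, ZMod.val_cast_of_lt (by omega)]
      omega
  · intro h
    obtain h | h : σ.val = 2 * k ∨ σ.val = 2 * k + 1 := by omega
    all_goals rw [← ZMod.natCast_zmod_val σ, h]; push_cast; simp

variable (m)

theorem exists_isHamiltonianPathSubgraph_partition :
    ∃ P : Fin m → (⊤ : SimpleGraph (Fin (2 * m))).Subgraph,
      (∀ i, IsHamiltonianPathSubgraph (P i)) ∧
      (∀ e ∈ (⊤ : SimpleGraph (Fin (2 * m))).edgeSet, ∃! i, e ∈ (P i).edgeSet) := by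
  refine ⟨fun k => sumSubgraph m (k : ℕ),
    fun k => isHamiltonianPathSubgraph_sumSubgraph m _, ?_⟩
  rintro ⟨u, v⟩ huv
  let e := ZMod.finEquiv (2 * m)
  have hmem (k : Fin m) :
      s(u, v) ∈ (sumSubgraph m (k : ℕ)).edgeSet ↔ (e u + e v).val / 2 = k := by
    rw [Subgraph.mem_edgeSet]
    change e u ≠ e v ∧ _ ↔ _
    rw [and_iff_right (e.injective.ne huv), eq_two_mul_or_eq_two_mul_add_one_iff _ k.isLt]
  simp only [hmem]
  exact ⟨⟨_, by have := (e u + e v).val_lt; omega⟩, rfl, fun k hk => Fin.ext hk.symm⟩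

end HamiltonianPathDecomposition

open HamiltonianPathDecomposition in
/-- For every even `n ≥ 2`, the edge set of `K_n` can be partitioned into `n/2`
Hamiltonian paths. -/
theorem complete_graph_hamiltonian_path_decomposition (n : ℕ) (hn : 2 ≤ n) (he : Even n) :
    ∃ P : Fin (n / 2) → (⊤ : SimpleGraph (Fin n)).Subgraph,
      (∀ i, IsHamiltonianPathSubgraph (P i)) ∧
      (∀ e ∈ (⊤ : SimpleGraph (Fin n)).edgeSet, ∃! i, e ∈ (P i).edgeSet) := by
  obtain ⟨m, rfl⟩ := he
  have : NeZero m := ⟨by omega⟩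
  rw [← two_mul, Nat.mul_div_cancel_left m two_pos]
  exact exists_isHamiltonianPathSubgraph_partition m
end

section
/- Given integers δ ≥ 3 and g ≥ 3, for every integer n ≥ 2(δ^{g−1} − 1)/(δ − 1) − 1 there exists a graph G on n vertices with minimum degree at least δ and girth at least g. -/
/-!
Take a graph with maximum degree at most `δ + 1` and girth at least `g` having as many edges as
possible, and suppose some vertex `v` has degree less than `δ`. Every other vertex has at most `δ`
neighbours farther from `v`, so the closed ball of radius `g - 2` about `v` has at most
`δ ^ (g - 2)` vertices; when `n > 2 δ ^ (g - 2)` the vertices at distance at least `g - 1` from `v`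
outnumber it. Joining such a far vertex to `v` closes no cycle shorter than `g`, so by maximality
every far vertex has degree `δ + 1`. Double counting the edges between the far vertices and the
sphere of radius `g - 2` then produces two adjacent far vertices `u, w`, and replacing the edge
`uw` by the path `u v w` keeps both bounds while adding an edge. Finally
`2 (δ ^ (g - 1) - 1) / (δ - 1) - 1 = 2 (1 + δ + ⋯ + δ ^ (g - 2)) - 1 > 2 δ ^ (g - 2)`.
-/

open SimpleGraph

namespace SimpleGraph

open Finset

variable {V : Type*} {G : SimpleGraph V} {a u v w x y : V}

theorem Adj.edist_le_edist_add_one (h : G.Adj x y) (v : V) : G.edist v y ≤ G.edist v x + 1 :=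
  SimpleGraph.edist_triangle.trans_eq (by rw [edist_eq_one_iff_adj.mpr h])

theorem apply_le_apply_add_edist {f : V → ℕ∞} (hf : ∀ ⦃x y⦄, G.Adj x y → f y ≤ f x + 1)
    (a b : V) : f b ≤ f a + G.edist a b := by
  have along_walk : ∀ {a b} (p : G.Walk a b), f b ≤ f a + p.length := by
    intro a b p
    induction p with
    | nil => simp
    | cons h p ih =>
      rw [Walk.length_cons, Nat.cast_succ]
      calc _ ≤ _ := ih
        _ ≤ f _ + 1 + p.length := add_le_add_left (hf h) _
        _ = _ := by ring
  obtain htop | htop := eq_or_ne (G.edist a b) ⊤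
  · simp [htop]
  obtain ⟨p, hp⟩ := exists_walk_of_edist_ne_top htop
  exact hp ▸ along_walk p

theorem min_edist_le_edist_sup_edge (v w x : V) :
    min (G.edist v x) (G.edist w x + 1) ≤ (G ⊔ edge v w).edist v x := by
  have hf : ∀ ⦃y z⦄, (G ⊔ edge v w).Adj y z →
      min (G.edist v z) (G.edist w z + 1) ≤ min (G.edist v y) (G.edist w y + 1) + 1 := by
    intro y z h
    rw [sup_adj, edge_adj] at h
    rcases h with h | ⟨⟨rfl, rfl⟩ | ⟨rfl, rfl⟩, -⟩
    · rw [← min_add_add_right]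
      exact min_le_min (h.edist_le_edist_add_one v)
        (add_le_add_left (h.edist_le_edist_add_one w) 1)
    · simp
    · simp
  simpa using apply_le_apply_add_edist hf v x

theorem exists_adj_edist_eq_of_edist_eq_add_one {k : ℕ} (h : G.edist v x = k + 1) :
    ∃ y, G.Adj y x ∧ G.edist v y = k := by
  obtain ⟨p, hp⟩ := exists_walk_of_edist_eq_coe (k := k + 1) (by exact_mod_cast h)
  have hnil : ¬p.Nil := Walk.not_nil_iff_lt_length.mpr (by omega)
  refine ⟨p.penultimate, p.adj_penultimate hnil, le_antisymm ?_ ?_⟩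
  · calc _ ≤ (p.dropLast.length : ℕ∞) := edist_le _
      _ = k := by simp [Walk.length_dropLast, hp]
  · have := (p.adj_penultimate hnil).edist_le_edist_add_one v
    rw [h] at this
    exact (ENat.add_le_add_iff_right ENat.one_ne_top).mp this

theorem Walk.IsTrail.edist_sdiff_edge_add_one_le_length [DecidableEq V] {c : G.Walk a a}
    (hc : c.IsTrail) (he : s(u, v) ∈ c.edges) : (G \ edge u v).edist u v + 1 ≤ c.length := by
  have huv : u ≠ v := (c.adj_of_mem_edges he).ne
  have hu := c.fst_mem_support_of_mem_edges he
  have he' : s(u, v) ∈ (c.rotate u hu).edges := (c.rotate_edges u hu).mem_iff.mpr he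
  have hv := (c.rotate u hu).snd_mem_support_of_mem_edges he'
  set p := (c.rotate u hu).takeUntil v hv
  set q := (c.rotate u hu).dropUntil v hv
  have hpq : p.append q = c.rotate u hu := (c.rotate u hu).take_spec hv
  have hlen : c.length = p.length + q.length := by
    rw [← Walk.length_rotate c u hu, ← hpq, Walk.length_append]
  have hp_pos : 0 < p.length := Nat.pos_of_ne_zero fun h ↦ huv (Walk.eq_of_length_eq_zero h)
  have hq_pos : 0 < q.length := Nat.pos_of_ne_zero fun h ↦ huv (Walk.eq_of_length_eq_zero h).symm
  -- the closed trail passes through `s(u, v)` only once, so one of the two arcs avoids it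
  have hnot : s(u, v) ∉ p.edges ∨ s(u, v) ∉ q.edges := by
    have hnodup := (hc.rotate hu).edges_nodup
    rw [← hpq, Walk.edges_append] at hnodup
    by_contra! h
    exact List.disjoint_of_nodup_append hnodup h.1 h.2
  rcases hnot with hp | hq
  · calc _ ≤ ((p.toDeleteEdge _ hp).length : ℕ∞) + 1 := add_le_add_left (edist_le _) 1
      _ ≤ c.length := by rw [Walk.length_transfer, hlen]; exact_mod_cast (by omega)
  · have hq' : s(u, v) ∉ q.reverse.edges := by simpa using hq
    calc _ ≤ ((q.reverse.toDeleteEdge _ hq').length : ℕ∞) + 1 :=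
          add_le_add_left (edist_le _) 1
      _ ≤ c.length := by
        rw [Walk.length_transfer, hlen, Walk.length_reverse]; exact_mod_cast (by omega)

theorem min_egirth_le_egirth_sup_edge (u v : V) :
    min G.egirth (G.edist u v + 1) ≤ (G ⊔ edge u v).egirth := by
  classical
  refine le_egirth.mpr fun a c hc ↦ ?_
  by_cases he : s(u, v) ∈ c.edges
  · have hle : (G ⊔ edge u v) \ edge u v ≤ G := by
      rw [sup_sdiff_right_self]; exact sdiff_le
    exact (min_le_right _ _).trans <| (add_le_add_left (edist_anti hle) 1).trans <|
      hc.isTrail.edist_sdiff_edge_add_one_le_length he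
  · have hsub : ∀ e ∈ c.edges, e ∈ G.edgeSet := fun e hec ↦ by
      have := c.edges_subset_edgeSet hec
      rw [edgeSet_sup] at this
      exact this.resolve_right fun h ↦ he (by rwa [← edgeSet_edge_subset h])
    calc min G.egirth _ ≤ G.egirth := min_le_left _ _
      _ ≤ (c.transfer G hsub).length := egirth_le_length (hc.transfer hsub)
      _ = c.length := by rw [Walk.length_transfer]

theorem Adj.egirth_le_edist_sdiff_edge_add_one (h : G.Adj u v) :
    G.egirth ≤ (G \ edge u v).edist u v + 1 := by
  obtain htop | htop := eq_or_ne ((G \ edge u v).edist u v) ⊤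
  · simp [htop]
  have hreach := reachable_of_edist_ne_top htop
  obtain ⟨p, hp, hlen⟩ := hreach.exists_path_of_dist
  set q : G.Walk u v := p.mapLe sdiff_le
  have hq : s(v, u) ∉ q.edges := fun hmem ↦ by
    rw [Walk.edges_mapLe_eq_edges, Sym2.eq_swap] at hmem
    have := p.edges_subset_edgeSet hmem
    simp at this
  calc G.egirth ≤ (Walk.cons h.symm q).length :=
        egirth_le_length (Path.cons_isCycle ⟨q, hp.mapLe sdiff_le⟩ h.symm hq)
    _ = _ := by simp [q, hlen, hreach.coe_dist_eq_edist]

theorem le_egirth_sup_edge_sup_edge {g : ℕ∞} (hG : g ≤ G.egirth) (hu : g ≤ G.edist v u + 1)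
    (hw : g ≤ G.edist v w + 1) (huw : g ≤ G.edist u w + 2) :
    g ≤ (G ⊔ edge v u ⊔ edge v w).egirth := by
  have hK : g ≤ (G ⊔ edge v u).egirth :=
    (le_min hG hu).trans (min_egirth_le_egirth_sup_edge v u)
  have hKw : g ≤ (G ⊔ edge v u).edist v w + 1 := by
    refine le_trans ?_ (add_le_add_left (min_edist_le_edist_sup_edge v u w) 1)
    rw [← min_add_add_right, add_assoc, one_add_one_eq_two]
    exact le_min hw huw
  exact (le_min hK hKw).trans (min_egirth_le_egirth_sup_edge v w)

theorem Adj.le_egirth_sdiff_edge_sup_edge_sup_edge {g : ℕ∞} (huw : G.Adj u w) (hG : g ≤ G.egirth)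
    (hu : g ≤ G.edist v u + 1) (hw : g ≤ G.edist v w + 1) :
    g ≤ (G \ edge u w ⊔ edge v u ⊔ edge v w).egirth := by
  have hle : G \ edge u w ≤ G := sdiff_le
  refine le_egirth_sup_edge_sup_edge (hG.trans (egirth_anti hle))
    (hu.trans (add_le_add_left (edist_anti hle) 1))
    (hw.trans (add_le_add_left (edist_anti hle) 1)) ?_
  calc g ≤ (G \ edge u w).edist u w + 1 := hG.trans huw.egirth_le_edist_sdiff_edge_add_one
    _ ≤ (G \ edge u w).edist u w + 2 := add_le_add_right (by norm_num) _

section Degree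

variable [Fintype V] [DecidableEq V] [DecidableRel G.Adj]

theorem degree_sup_edge_of_ne (hu : x ≠ u) (hv : x ≠ v) :
    (G ⊔ edge u v).degree x = G.degree x := by
  simp_rw [← card_neighborFinset_eq_degree]
  congr 1
  ext y
  simp [edge_adj, hu, hv]

theorem degree_sup_edge_le_add_one (u v x : V) : (G ⊔ edge u v).degree x ≤ G.degree x + 1 := by
  simp_rw [← card_neighborFinset_eq_degree]
  have hsub : (G ⊔ edge u v).neighborFinset x ⊆
      insert (if x = u then v else u) (G.neighborFinset x) := by
    intro y
    simp only [mem_neighborFinset, mem_insert, sup_adj, edge_adj]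
    split_ifs <;> aesop
  exact (card_le_card hsub).trans (card_insert_le _ _)

theorem degree_sup_edge_le {D : ℕ} (hG : ∀ x, G.degree x ≤ D) (hu : G.degree u < D)
    (hv : G.degree v < D) (x : V) : (G ⊔ edge u v).degree x ≤ D := by
  by_cases hx : x = u ∨ x = v
  · have := degree_sup_edge_le_add_one (G := G) u v x
    rcases hx with rfl | rfl <;> omega
  · push Not at hx
    rw [degree_sup_edge_of_ne hx.1 hx.2]
    exact hG x

theorem Adj.degree_sdiff_edge_lt (h : G.Adj u v) (hx : x = u ∨ x = v) :
    (G \ edge u v).degree x < G.degree x := by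
  simp_rw [← card_neighborFinset_eq_degree]
  refine card_lt_card ((ssubset_iff_of_subset fun y ↦ ?_).mpr ?_)
  · simp +contextual
  · rcases hx with rfl | rfl
    · exact ⟨v, by simpa using h, by simp [edge_adj, h.ne]⟩
    · exact ⟨u, by simpa using h.symm, by simp [edge_adj, h.ne.symm]⟩

theorem degree_sdiff_edge_sup_edge_sup_edge_le {D : ℕ} (hG : ∀ x, G.degree x ≤ D)
    (huw : G.Adj u w) (hvw : v ≠ w) (hv : G.degree v + 2 ≤ D) (x : V) :
    (G \ edge u w ⊔ edge v u ⊔ edge v w).degree x ≤ D := by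
  have hH : ∀ x, (G \ edge u w).degree x ≤ G.degree x := fun x ↦ degree_le_of_le sdiff_le
  have hHu : (G \ edge u w).degree u < D := (huw.degree_sdiff_edge_lt (.inl rfl)).trans_le (hG u)
  have hHw : (G \ edge u w).degree w < D := (huw.degree_sdiff_edge_lt (.inr rfl)).trans_le (hG w)
  refine degree_sup_edge_le (degree_sup_edge_le (fun x ↦ (hH x).trans (hG x)) ?_ hHu) ?_ ?_ x
  · have := hH v; omega
  · have := degree_sup_edge_le_add_one (G := G \ edge u w) v u v
    have := hH v; omega
  · rwa [degree_sup_edge_of_ne hvw.symm huw.ne.symm]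

end Degree

section EdgeCount

variable [Finite V]

theorem ncard_edgeSet_sup_edge (h : ¬G.Adj u v) (hne : u ≠ v) :
    (G ⊔ edge u v).edgeSet.ncard = G.edgeSet.ncard + 1 := by
  rw [edgeSet_sup, edgeSet_edge_of_ne hne, Set.union_singleton,
    Set.ncard_insert_of_notMem (by rwa [mem_edgeSet]) (Set.toFinite _)]

theorem ncard_edgeSet_sdiff_edge_sup_edge_sup_edge (huw : G.Adj u w) (hvu : ¬G.Adj v u)
    (hvw : ¬G.Adj v w) (hu : v ≠ u) (hw : v ≠ w) :
    (G \ edge u w ⊔ edge v u ⊔ edge v w).edgeSet.ncard = G.edgeSet.ncard + 1 := by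
  have hG : G \ edge u w ⊔ edge u w = G := sdiff_sup_cancel ((edge_le_iff _).mpr (.inr huw))
  have hdel := ncard_edgeSet_sup_edge (G := G \ edge u w) (by simp [edge_adj, huw.ne]) huw.ne
  rw [hG] at hdel
  rw [ncard_edgeSet_sup_edge (by simp [edge_adj, hvw, hu, hw.symm, huw.ne.symm]) hw,
    ncard_edgeSet_sup_edge (by simp [hvu]) hu, hdel]

end EdgeCount

section Counting

variable [Fintype V] [DecidableRel G.Adj]

theorem card_filter_adj_lt_degree {k : ℕ} (h : G.edist v x = k + 1) {s : Finset V}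
    (hs : ∀ y ∈ s, G.edist v x ≤ G.edist v y) : #{y ∈ s | G.Adj y x} < G.degree x := by
  classical
  obtain ⟨y, hyx, hy⟩ := exists_adj_edist_eq_of_edist_eq_add_one h
  have hsub : {z ∈ s | G.Adj z x} ⊆ (G.neighborFinset x).erase y := fun z hz ↦ by
    rw [mem_filter] at hz
    refine mem_erase.mpr ⟨fun hzy ↦ ?_, by simpa using hz.2.symm⟩
    have := hs z hz.1
    rw [h, hzy, hy] at this
    exact (ENat.add_one_le_iff (ENat.natCast_ne_top k)).mp this |>.false
  exact (card_le_card hsub).trans_lt (card_erase_lt_of_mem (by simpa using hyx.symm))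

theorem card_filter_edist_eq_add_one_le {Δ : ℕ} (hdeg : ∀ x, G.degree x ≤ Δ + 1) (v : V)
    (k : ℕ) : #{u | G.edist v u = k + 1} ≤ G.degree v * Δ ^ k := by
  induction k with
  | zero =>
    simp [edist_eq_one_iff_adj, ← card_neighborFinset_eq_degree, neighborFinset_eq_filter]
  | succ k ih =>
    have hcount := card_mul_le_card_mul G.Adj (s := {u | G.edist v u = ↑(k + 1) + 1})
      (t := {x | G.edist v x = k + 1}) (m := 1) (n := Δ) ?_ ?_
    · calc _ = _ := (mul_one _).symm
        _ ≤ _ := hcount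
        _ ≤ G.degree v * Δ ^ k * Δ := Nat.mul_le_mul_right _ ih
        _ = _ := by ring
    · intro u hu
      simp only [mem_filter, mem_univ, true_and] at hu
      obtain ⟨x, hxu, hx⟩ := exists_adj_edist_eq_of_edist_eq_add_one hu
      exact card_pos.mpr ⟨x, by simpa [bipartiteAbove, hxu.symm] using hx⟩
    · intro x hx
      simp only [mem_filter, mem_univ, true_and] at hx
      have := card_filter_adj_lt_degree hx (s := {u | G.edist v u = ↑(k + 1) + 1})
        fun y hy ↦ by simp only [mem_filter, mem_univ, true_and] at hy; simp [hx, hy]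
      exact Nat.le_of_lt_succ (this.trans_le (hdeg x))

theorem card_filter_edist_le_le_pow {Δ : ℕ} (hdeg : ∀ x, G.degree x ≤ Δ + 1)
    (hv : G.degree v < Δ) (r : ℕ) : #{u | G.edist v u ≤ r} ≤ Δ ^ r := by
  classical
  induction r with
  | zero => simp [edist_eq_zero_iff, filter_eq]
  | succ r ih =>
    have hsub : ({u | G.edist v u ≤ ↑(r + 1)} : Finset V) ⊆
        ({u | G.edist v u ≤ r} : Finset V) ∪ ({u | G.edist v u = r + 1} : Finset V) := by
      intro u
      simp only [mem_filter, mem_univ, true_and, mem_union, Nat.cast_succ]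
      intro hu
      rcases hu.lt_or_eq with hlt | heq
      · exact .inl ((ENat.lt_add_one_iff (ENat.natCast_ne_top r)).mp hlt)
      · exact .inr heq
    calc _ ≤ _ := card_le_card hsub
      _ ≤ _ := card_union_le _ _
      _ ≤ Δ ^ r + G.degree v * Δ ^ r := add_le_add ih (card_filter_edist_eq_add_one_le hdeg v r)
      _ = (G.degree v + 1) * Δ ^ r := by ring
      _ ≤ Δ * Δ ^ r := Nat.mul_le_mul_right _ hv
      _ = Δ ^ (r + 1) := by ring

theorem exists_adj_of_card_filter_edist_le_lt {δ r : ℕ} (hr : 0 < r)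
    (hdeg : ∀ x, G.degree x ≤ δ + 1) (hfar : ∀ u, (r : ℕ∞) < G.edist v u → δ + 1 ≤ G.degree u)
    (hcard : #{u | G.edist v u ≤ r} < #{u | (r : ℕ∞) < G.edist v u}) :
    ∃ u w, (r : ℕ∞) < G.edist v u ∧ (r : ℕ∞) < G.edist v w ∧ G.Adj u w := by
  by_contra! hind
  obtain ⟨k, rfl⟩ : ∃ k, r = k + 1 := ⟨r - 1, by omega⟩
  set T : Finset V := {u | ((k + 1 : ℕ) : ℕ∞) < G.edist v u}
  set S : Finset V := {x | G.edist v x = k + 1}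
  -- as no two far vertices are adjacent, their neighbours all lie on the sphere of radius `r`
  have hcount := card_mul_le_card_mul G.Adj (s := T) (t := S) (m := δ + 1) (n := δ) ?_ ?_
  · have hST : #S ≤ #{u | G.edist v u ≤ ↑(k + 1)} :=
      card_le_card fun u hu ↦ by
        simp only [S, mem_filter] at hu ⊢
        exact ⟨hu.1, by push_cast; exact hu.2.le⟩
    nlinarith
  · intro u hu
    refine (hfar u (by simpa [T] using hu)).trans ?_
    rw [← card_neighborFinset_eq_degree]
    refine card_le_card fun y hy ↦ ?_
    simp only [mem_neighborFinset] at hy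
    simp only [T, S, bipartiteAbove, mem_filter, mem_univ, true_and] at hu ⊢
    refine ⟨le_antisymm ?_ ?_, hy⟩
    · simpa using fun h ↦ hind u y hu h hy
    · have := hy.symm.edist_le_edist_add_one v
      push_cast at hu
      exact (ENat.add_le_add_iff_right ENat.one_ne_top).mp
        (Order.add_one_le_of_lt (hu.trans_le this))
  · intro x hx
    simp only [S, mem_filter, mem_univ, true_and] at hx
    have := card_filter_adj_lt_degree hx (s := T) fun y hy ↦ by
      simp only [T, mem_filter, mem_univ, true_and] at hy
      rw [hx]; exact_mod_cast hy.le
    exact Nat.le_of_lt_succ (this.trans_le (hdeg x))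

end Counting

theorem le_degree_of_maximal [Fintype V] [DecidableEq V] [DecidableRel G.Adj] {δ r : ℕ}
    (hr : 0 < r) (hV : 2 * δ ^ r < Fintype.card V) (hdeg : ∀ x, G.degree x ≤ δ + 1)
    (hgirth : (r + 2 : ℕ∞) ≤ G.egirth)
    (hmax : ∀ (G' : SimpleGraph V) [DecidableRel G'.Adj], (∀ x, G'.degree x ≤ δ + 1) →
      (r + 2 : ℕ∞) ≤ G'.egirth → G'.edgeSet.ncard ≤ G.edgeSet.ncard)
    (v : V) : δ ≤ G.degree v := by
  by_contra! hv
  have far : ∀ {u}, (r : ℕ∞) < G.edist v u →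
      (r + 2 : ℕ∞) ≤ G.edist v u + 1 ∧ v ≠ u ∧ ¬G.Adj v u := by
    intro u hu
    have hnear : ¬G.edist v u ≤ 1 := not_le.mpr (lt_of_le_of_lt (by exact_mod_cast hr) hu)
    rw [edist_le_one_iff_adj_or_eq, not_or] at hnear
    refine ⟨?_, hnear.2, hnear.1⟩
    rw [show (r + 2 : ℕ∞) = r + 1 + 1 by ring]
    exact add_le_add_left (Order.add_one_le_of_lt hu) 1
  -- a far vertex of degree at most `δ` could be joined to `v`
  have hfull : ∀ u, (r : ℕ∞) < G.edist v u → δ + 1 ≤ G.degree u := by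
    intro u hu
    by_contra! hu'
    obtain ⟨hgu, hvu, hadj⟩ := far hu
    have := hmax (G ⊔ edge v u) (degree_sup_edge_le hdeg (by omega) (by omega))
      ((le_min hgirth hgu).trans (min_egirth_le_egirth_sup_edge v u))
    rw [ncard_edgeSet_sup_edge hadj hvu] at this
    omega
  have hcard : #{u | G.edist v u ≤ r} < #{u | (r : ℕ∞) < G.edist v u} := by
    have hball := card_filter_edist_le_le_pow hdeg hv r
    have hsplit := card_filter_add_card_filter_not (s := univ) (fun u ↦ G.edist v u ≤ r)
    simp only [not_le, card_univ] at hsplit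
    omega
  -- so two far vertices `u, w` are adjacent, and replacing `uw` by the path `u v w` gains an edge
  obtain ⟨u, w, hu, hw, huw⟩ := exists_adj_of_card_filter_edist_le_lt hr hdeg hfull hcard
  obtain ⟨hgu, hvu, hu'⟩ := far hu
  obtain ⟨hgw, hvw, hw'⟩ := far hw
  have := hmax _ (degree_sdiff_edge_sup_edge_sup_edge_le hdeg huw hvw (by omega))
    (huw.le_egirth_sdiff_edge_sup_edge_sup_edge hgirth hgu hgw)
  rw [ncard_edgeSet_sdiff_edge_sup_edge_sup_edge huw hu' hw' hvu hvw] at this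
  omega

theorem ncard_neighborSet_eq_degree [Fintype V] [DecidableRel G.Adj] (v : V) :
    (G.neighborSet v).ncard = G.degree v := by
  rw [← Nat.card_coe_set_eq, Nat.card_eq_fintype_card, card_neighborSet_eq_degree]

theorem exists_le_ncard_neighborSet_le_egirth [Fintype V] {δ r : ℕ} (hr : 0 < r)
    (hV : 2 * δ ^ r < Fintype.card V) :
    ∃ G : SimpleGraph V, (∀ v, δ ≤ (G.neighborSet v).ncard) ∧ (r + 2 : ℕ∞) ≤ G.egirth := by
  classical
  obtain ⟨G, ⟨hdeg, hgirth⟩, hmax⟩ := Set.Finite.exists_maximalFor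
    (fun G : SimpleGraph V ↦ G.edgeSet.ncard)
    {G | (∀ x, G.degree x ≤ δ + 1) ∧ (r + 2 : ℕ∞) ≤ G.egirth} (Set.toFinite _)
    ⟨⊥, fun x ↦ by simp, by simp only [egirth_bot, le_top]⟩
  refine ⟨G, fun v ↦ ?_, hgirth⟩
  rw [ncard_neighborSet_eq_degree]
  refine le_degree_of_maximal hr hV hdeg hgirth (fun G' _ hdeg' hgirth' ↦ ?_) v
  by_contra! hlt
  exact hlt.not_ge (hmax ⟨fun x ↦ by convert hdeg' x, hgirth'⟩ hlt.le)

end SimpleGraph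

/-- Given `δ ≥ 3` and `g ≥ 3`, for every `n ≥ 2(δ^{g−1} − 1)/(δ − 1) − 1` there exists a
graph on `n` vertices with minimum degree at least `δ` and girth at least `g`. -/
theorem exists_large_girth_min_degree (δ g n : ℕ) (hδ : 3 ≤ δ) (hg : 3 ≤ g)
    (hn : 2 * ((δ : ℝ) ^ (g - 1) - 1) / ((δ : ℝ) - 1) - 1 ≤ (n : ℝ)) :
    ∃ G : SimpleGraph (Fin n),
      (∀ v, δ ≤ (G.neighborSet v).ncard) ∧ (g : ℕ∞) ≤ G.egirth := by
  obtain ⟨r, rfl⟩ : ∃ r, g = r + 2 := ⟨g - 2, by omega⟩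
  have hgeom : ((δ : ℝ) ^ (r + 1) - 1) / (δ - 1) = ∑ i ∈ Finset.range (r + 1), (δ : ℝ) ^ i :=
    (geom_sum_eq (by norm_cast; omega) _).symm
  have hsum : δ ^ r + 1 ≤ ∑ i ∈ Finset.range (r + 1), δ ^ i := by
    rw [Finset.sum_range_succ, add_comm]
    gcongr
    exact Finset.single_le_sum (f := (δ ^ ·)) (fun _ _ ↦ Nat.zero_le _)
      (Finset.mem_range.mpr (by omega : 0 < r))
  have hV : 2 * δ ^ r < Fintype.card (Fin n) := by
    rw [show r + 2 - 1 = r + 1 by omega, mul_div_assoc, hgeom] at hn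
    have : ((δ ^ r + 1 : ℕ) : ℝ) ≤ ∑ i ∈ Finset.range (r + 1), (δ : ℝ) ^ i := by
      exact_mod_cast hsum
    rw [Fintype.card_fin]
    exact_mod_cast (by push_cast at this ⊢; linarith : ((2 * δ ^ r : ℕ) : ℝ) < n)
  simpa using exists_le_ncard_neighborSet_le_egirth (by omega) hV
end

section
/- Let k ≥ 3 and ℓ ≥ 1 be integers. For every n ≥ 2((ℓ(k−1)+k)^4 − 1)/((ℓ+1)(k−1)) − 1, px_{k,ℓ}(K_n) = 2: there exists a 2-edge-coloring of K_n such that every k-subset S of vertices is contained in ℓ internally disjoint proper S-paths. -/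
open SimpleGraph

/-- No two adjacent edges of the subgraph `T` receive the same color under `c`. -/
def ProperSubgraph {V α : Type*} {G : SimpleGraph V} (c : Sym2 V → α) (T : G.Subgraph) : Prop :=
  ∀ u v w, T.Adj u v → T.Adj u w → v ≠ w → c s(u, v) ≠ c s(u, w)

/-- `c` is a `(k,ℓ)`-proper coloring of `G`: every `k`-subset `S` of vertices is connected by
`ℓ` internally disjoint proper `S`-trees. -/
def IsProperColoring {V α : Type*} (G : SimpleGraph V) (k ℓ : ℕ) (c : Sym2 V → α) : Prop :=
  ∀ S : Finset V, S.card = k →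
    ∃ T : Fin ℓ → G.Subgraph,
      (∀ i, IsSTree G (S : Set V) (T i) ∧ ProperSubgraph c (T i)) ∧
      InternallyDisjoint (S : Set V) T

/-- The `(k,ℓ)`-proper index of `G` is at most `m`. -/
def pxLE {V : Type*} (G : SimpleGraph V) (k ℓ m : ℕ) : Prop :=
  ∃ c : Sym2 V → Fin m, IsProperColoring G k ℓ c

/-- The `(k,ℓ)`-proper index of `G` equals `2`. -/
def pxEq2 {V : Type*} (G : SimpleGraph V) (k ℓ : ℕ) : Prop :=
  pxLE G k ℓ 2 ∧ ¬ pxLE G k ℓ 1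

/-!
Colour an edge of `K_n` by whether its two ends lie on the same side of a fixed partition
`P : V → Bool`. At a vertex `u`, the edges to `v` and `w` then differ in colour exactly when `v`
and `w` lie on different sides, so a path is properly coloured iff vertices two apart along it
lie on opposite sides, e.g. if the sides along the path follow the pattern `0110 0110 …`.

Given a `k`-set `S = {s 0, …, s (k-1)}`, the `i`-th path runs through `4k` positions: in block `j`
the vertex `s j` takes the even slot (offset `0` or `2`) whose pattern value is its side, and
every other position holds a fresh vertex of the right side, private to path `i`. Since all odd
positions are private, two of these paths meet only in `S` and share no edge. Fresh vertices
exist as soon as both sides of the partition are large, which the bound on `n` guarantees.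

With a single colour, a proper tree has maximum degree at most one, so it has at most two
vertices and cannot contain a set of `k ≥ 3` vertices.
-/

open Finset

namespace SimpleGraph

variable {V : Type*} {m : ℕ}

lemma pathGraph_mem_edges_of_walk {a b i j : Fin m} (p : (pathGraph m).Walk a b)
    (hij : i.val + 1 = j.val) (ha : a.val ≤ i.val) (hb : j.val ≤ b.val) : s(i, j) ∈ p.edges := by
  induction p with
  | nil => omega
  | @cons a c b hac q ih =>
    rw [pathGraph_adj] at hac
    by_cases hc : c.val ≤ i.val
    · exact List.mem_cons_of_mem _ (ih hc hb)
    · have hai : a = i := Fin.ext (by omega)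
      have hcj : c = j := Fin.ext (by omega)
      simp [hai, hcj]

theorem pathGraph_isAcyclic (m : ℕ) : (pathGraph m).IsAcyclic := by
  rw [isAcyclic_iff_forall_adj_isBridge]
  intro v w hvw
  rw [isBridge_iff_forall_walk_mem_edges]
  intro p
  rcases pathGraph_adj.mp hvw with h | h
  · exact pathGraph_mem_edges_of_walk p h le_rfl le_rfl
  · simpa [Sym2.eq_swap] using pathGraph_mem_edges_of_walk p.reverse h le_rfl le_rfl

theorem pathGraph_isTree (m : ℕ) : (pathGraph (m + 1)).IsTree :=
  ⟨pathGraph_connected m, pathGraph_isAcyclic _⟩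

lemma Walk.eq_or_adj_of_adj_unique {G : SimpleGraph V}
    (hG : ∀ u v w, G.Adj u v → G.Adj u w → v = w) {x y : V} (p : G.Walk x y) :
    x = y ∨ G.Adj x y := by
  induction p with
  | nil => exact .inl rfl
  | @cons x z y hxz q ih =>
    rcases ih with rfl | hzy
    · exact .inr hxz
    · exact .inl (hG z x y hxz.symm hzy)

lemma Connected.eq_or_eq_or_eq_of_adj_unique {G : SimpleGraph V} (hG : G.Connected)
    (h : ∀ u v w, G.Adj u v → G.Adj u w → v = w) (a b c : V) : a = b ∨ a = c ∨ b = c := by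
  obtain ⟨p⟩ := hG a b
  obtain ⟨q⟩ := hG a c
  rcases p.eq_or_adj_of_adj_unique h with hab | hab
  · exact .inl hab
  rcases q.eq_or_adj_of_adj_unique h with hac | hac
  · exact .inr (.inl hac)
  exact .inr (.inr (h a b c hab hac))

lemma Subgraph.edgeSet_inter_eq_empty_of_verts_inter_subset {G : SimpleGraph V}
    {H₁ H₂ : G.Subgraph} {S : Set V} (hverts : H₁.verts ∩ H₂.verts ⊆ S)
    (hadj : ∀ u v, H₁.Adj u v → u ∉ S ∨ v ∉ S) : H₁.edgeSet ∩ H₂.edgeSet = ∅ := by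
  ext e
  induction e using Sym2.ind with
  | _ u v =>
    simp only [Set.mem_inter_iff, Subgraph.mem_edgeSet, Set.mem_empty_iff_false, iff_false]
    rintro ⟨h₁, h₂⟩
    rcases hadj u v h₁ with hu | hv
    · exact hu (hverts ⟨h₁.fst_mem, h₂.fst_mem⟩)
    · exact hv (hverts ⟨h₁.snd_mem, h₂.snd_mem⟩)

def pathCopy (f : Fin m ↪ V) : Copy (pathGraph m) (⊤ : SimpleGraph V) :=
  ⟨⟨f, fun h => f.injective.ne h.ne⟩, f.injective⟩

def pathSubgraph (f : Fin m ↪ V) : (⊤ : SimpleGraph V).Subgraph :=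
  (pathCopy f).toSubgraph

@[simp] lemma pathSubgraph_verts (f : Fin m ↪ V) : (pathSubgraph f).verts = Set.range f := by
  simp [pathSubgraph, pathCopy]

lemma pathSubgraph_adj {f : Fin m ↪ V} {u v : V} :
    (pathSubgraph f).Adj u v ↔ ∃ a b, (pathGraph m).Adj a b ∧ f a = u ∧ f b = v := by
  simp [pathSubgraph, pathCopy, Relation.Map]

lemma pathSubgraph_isTree (f : Fin (m + 1) ↪ V) : (pathSubgraph f).coe.IsTree :=
  (Copy.isoToSubgraph _).isTree_iff.mp (pathGraph_isTree m)

end SimpleGraph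

variable {V : Type*} {m : ℕ}

def sideColoring (P : V → Bool) : Sym2 V → Fin 2 :=
  Sym2.lift ⟨fun u v => if P u = P v then 0 else 1, fun u v => by simp only [eq_comm]⟩

lemma sideColoring_ne_iff {P : V → Bool} {u v w : V} :
    sideColoring P s(u, v) ≠ sideColoring P s(u, w) ↔ P v ≠ P w := by
  simp only [sideColoring, Sym2.lift_mk]
  cases P u <;> cases P v <;> cases P w <;> decide

lemma isSTree_pathSubgraph {S : Set V} (f : Fin m ↪ V) (hm : m ≠ 0) (hS : S ⊆ Set.range f) :
    IsSTree ⊤ S (pathSubgraph f) := by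
  obtain ⟨m, rfl⟩ := Nat.exists_eq_succ_of_ne_zero hm
  exact ⟨pathSubgraph_isTree f, by simpa using hS⟩

lemma properSubgraph_pathSubgraph (P : V → Bool) (f : Fin m ↪ V)
    (hf : ∀ a b : Fin m, b.val = a.val + 2 → P (f a) ≠ P (f b)) :
    ProperSubgraph (sideColoring P) (pathSubgraph f) := by
  intro u v w huv huw hvw
  obtain ⟨a, b, hab, rfl, rfl⟩ := pathSubgraph_adj.mp huv
  obtain ⟨a', c, hac, ha', rfl⟩ := pathSubgraph_adj.mp huw
  obtain rfl := f.injective ha'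
  have hbc : b ≠ c := fun h => hvw (h ▸ rfl)
  rw [pathGraph_adj] at hab hac
  rw [sideColoring_ne_iff]
  rcases hab with hab | hab <;> rcases hac with hac | hac
  · exact absurd (Fin.ext (by omega)) hbc
  · exact (hf c b (by omega)).symm
  · exact hf b c (by omega)
  · exact absurd (Fin.ext (by omega)) hbc

lemma internallyDisjoint_pathSubgraph_pair {S : Set V} (f₁ f₂ : Fin m ↪ V)
    (h₁ : S ⊆ Set.range f₁) (h₂ : S ⊆ Set.range f₂) (hinter : Set.range f₁ ∩ Set.range f₂ ⊆ S)
    (hodd : ∀ p : Fin m, p.val % 2 = 1 → f₁ p ∉ S) :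
    (pathSubgraph f₁).edgeSet ∩ (pathSubgraph f₂).edgeSet = ∅ ∧
      (pathSubgraph f₁).verts ∩ (pathSubgraph f₂).verts = S := by
  simp only [pathSubgraph_verts] at *
  refine ⟨Subgraph.edgeSet_inter_eq_empty_of_verts_inter_subset (by simpa using hinter) ?_,
    hinter.antisymm (Set.subset_inter h₁ h₂)⟩
  intro u v huv
  obtain ⟨a, b, hab, rfl, rfl⟩ := pathSubgraph_adj.mp huv
  rw [pathGraph_adj] at hab
  rcases Nat.mod_two_eq_zero_or_one a.val with ha | ha
  · exact .inr (hodd b (by omega))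
  · exact .inl (hodd a ha)

def sidePattern (p : ℕ) : Bool := decide (p % 4 = 1 ∨ p % 4 = 2)

lemma sidePattern_ne_add_two (p : ℕ) : sidePattern p ≠ sidePattern (p + 2) := by
  simp only [sidePattern, ne_eq, decide_eq_decide]
  omega

def slotOffset (b : Bool) : Fin 4 := bif b then 2 else 0

lemma slotOffset_val_even (b : Bool) : (slotOffset b).val % 2 = 0 := by
  cases b <;> rfl

lemma sidePattern_of_mod_four_eq {p : ℕ} {b : Bool} (hp : p % 4 = slotOffset b) :
    sidePattern p = b := by
  cases b <;> simp_all [sidePattern, slotOffset]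

section PathVertex

variable (P : V → Bool) {k : ℕ} (s : Fin k → V) (con : Fin (k * 4) → V)

def slot (j : Fin k) : Fin (k * 4) := Fin.mkDivMod j (slotOffset (P (s j)))

def pathVertex (p : Fin (k * 4)) : V :=
  if p.modNat = slotOffset (P (s p.divNat)) then s p.divNat else con p

lemma pathVertex_slot (j : Fin k) : pathVertex P s con (slot P s j) = s j := by
  simp [pathVertex, slot]

variable {P s con}

lemma pathVertex_eq_or_eq (p : Fin (k * 4)) :
    pathVertex P s con p = s p.divNat ∨ pathVertex P s con p = con p := by
  unfold pathVertex
  split_ifs <;> simp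

lemma pathVertex_of_odd {p : Fin (k * 4)} (hp : p.val % 2 = 1) :
    pathVertex P s con p = con p := by
  have : p.modNat ≠ slotOffset (P (s p.divNat)) := by
    intro h
    have := slotOffset_val_even (P (s p.divNat))
    rw [← h, Fin.coe_modNat] at this
    omega
  simp [pathVertex, this]

lemma side_pathVertex (hcon : ∀ p, P (con p) = sidePattern p) (p : Fin (k * 4)) :
    P (pathVertex P s con p) = sidePattern p := by
  unfold pathVertex
  split_ifs with h
  · exact (sidePattern_of_mod_four_eq (congrArg Fin.val h)).symm
  · exact hcon p

lemma pathVertex_injective (hs : Function.Injective s) (hcon : Function.Injective con)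
    (hcs : ∀ p j, con p ≠ s j) : Function.Injective (pathVertex P s con) := by
  intro a b hab
  unfold pathVertex at hab
  split_ifs at hab with ha hb hb
  · rw [← Fin.divNat_mkDivMod_modNat a, ← Fin.divNat_mkDivMod_modNat b, ha, hb, hs hab]
  · exact absurd hab.symm (hcs _ _)
  · exact absurd hab (hcs _ _)
  · exact hcon hab

end PathVertex

lemma exists_injective_side_notMem [Fintype V] [DecidableEq V] {α : Type*} [Fintype α]
    (P : V → Bool) (S : Finset V) (side : α → Bool)
    (hP : ∀ b, Fintype.card α + #S ≤ #{v | P v = b}) :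
    ∃ g : α → V, Function.Injective g ∧ ∀ a, g a ∉ S ∧ P (g a) = side a := by
  have hemb (b : Bool) : Nonempty (α ↪ ↥(({v | P v = b} : Finset V) \ S)) := by
    refine Function.Embedding.nonempty_of_card_le ?_
    have := Finset.le_card_sdiff S {v | P v = b}
    simp only [Fintype.card_coe]
    have := hP b
    omega
  have e (b : Bool) := (hemb b).some
  have he (b : Bool) (a : α) : (e b a : V) ∉ S ∧ P (e b a) = b := by
    have := (e b a).2
    simp only [Finset.mem_sdiff, Finset.mem_filter, Finset.mem_univ, true_and] at this
    exact ⟨this.2, this.1⟩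
  have he_inj (b b' : Bool) (x x' : α) (h : (e b x : V) = e b' x') (hb : b = b') : x = x' := by
    subst hb
    exact (e b).injective (Subtype.ext h)
  refine ⟨fun a => e (side a) a, fun a a' h => ?_, fun a => he (side a) a⟩
  exact he_inj _ _ a a' h ((he _ a).2.symm.trans ((congrArg P h).trans (he _ a').2))

lemma exists_proper_paths_of_connectors (P : V → Bool) {k ℓ : ℕ} (hk : k ≠ 0) {S : Set V}
    (s : Fin k → V) (hs : Function.Injective s) (hsS : Set.range s = S)
    (g : Fin ℓ × Fin (k * 4) → V) (hg : Function.Injective g) (hgS : ∀ a, g a ∉ S)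
    (hgP : ∀ i p, P (g (i, p)) = sidePattern p) :
    ∃ T : Fin ℓ → (⊤ : SimpleGraph V).Subgraph,
      (∀ i, IsSTree ⊤ S (T i) ∧ ProperSubgraph (sideColoring P) (T i)) ∧
        InternallyDisjoint S T := by
  subst hsS
  have hgi (i : Fin ℓ) : Function.Injective fun p => g (i, p) :=
    fun p q h => (Prod.ext_iff.mp (hg h)).2
  have hgs (i : Fin ℓ) (p : Fin (k * 4)) (j : Fin k) : g (i, p) ≠ s j :=
    fun h => hgS _ ⟨j, h.symm⟩
  let f (i : Fin ℓ) : Fin (k * 4) ↪ V :=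
    ⟨pathVertex P s fun p => g (i, p), pathVertex_injective hs (hgi i) (hgs i)⟩
  have hfv (i : Fin ℓ) (p : Fin (k * 4)) : f i p = pathVertex P s (fun p => g (i, p)) p := rfl
  have hf (i : Fin ℓ) (p : Fin (k * 4)) (hp : f i p ∉ Set.range s) : f i p = g (i, p) :=
    (pathVertex_eq_or_eq p).resolve_left fun h => hp ⟨_, (hfv i p ▸ h).symm⟩
  have hSf (i : Fin ℓ) : Set.range s ⊆ Set.range (f i) := by
    rintro _ ⟨j, rfl⟩
    exact ⟨slot P s j, (hfv i _).trans (pathVertex_slot P s _ j)⟩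
  have hodd (i : Fin ℓ) (p : Fin (k * 4)) (hp : p.val % 2 = 1) : f i p ∉ Set.range s := by
    rw [hfv, pathVertex_of_odd hp]
    exact hgS _
  have hinter (i j : Fin ℓ) (hij : i ≠ j) : Set.range (f i) ∩ Set.range (f j) ⊆ Set.range s := by
    rintro _ ⟨⟨p, rfl⟩, ⟨q, hq⟩⟩
    by_contra hp
    have hq' : f j q ∉ Set.range s := hq ▸ hp
    rw [hf i p hp, hf j q hq'] at hq
    exact hij (Prod.ext_iff.mp (hg hq)).1.symm
  refine ⟨fun i => pathSubgraph (f i), fun i => ⟨isSTree_pathSubgraph (f i) (by omega) (hSf i), ?_⟩,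
    fun i j hij => internallyDisjoint_pathSubgraph_pair (f i) (f j) (hSf i) (hSf j)
      (hinter i j hij) (hodd i)⟩
  refine properSubgraph_pathSubgraph P (f i) fun a b hab => ?_
  rw [hfv, hfv, side_pathVertex (hgP i), side_pathVertex (hgP i), hab]
  exact sidePattern_ne_add_two _

theorem isProperColoring_sideColoring [Fintype V] [DecidableEq V] (P : V → Bool) {k ℓ : ℕ}
    (hk : k ≠ 0) (hP : ∀ b, ℓ * (k * 4) + k ≤ #{v | P v = b}) :
    IsProperColoring ⊤ k ℓ (sideColoring P) := by
  intro S hS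
  obtain ⟨g, hg, hgS⟩ := exists_injective_side_notMem P S
    (fun a : Fin ℓ × Fin (k * 4) => sidePattern a.2) (by simpa [hS] using hP)
  let e : Fin k ≃ S := (Fintype.equivFinOfCardEq (by simpa using hS)).symm
  refine exists_proper_paths_of_connectors P hk (Subtype.val ∘ e)
    (Subtype.val_injective.comp e.injective) ?_ g hg (fun a => (hgS a).1) fun i p => (hgS (i, p)).2
  simp [Set.range_comp, e.range_eq_univ]

lemma pxLE_top_fin_two {n k ℓ : ℕ} (hk : k ≠ 0) (hn : 2 * (ℓ * (k * 4) + k) ≤ n) :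
    pxLE (⊤ : SimpleGraph (Fin n)) k ℓ 2 := by
  refine ⟨_, isProperColoring_sideColoring (fun v : Fin n => decide (v.val < ℓ * (k * 4) + k)) hk
    fun b => ?_⟩
  have hlow := Fin.card_filter_val_lt (n := n) (m := ℓ * (k * 4) + k)
  have hsplit := Finset.card_filter_add_card_filter_not (s := Finset.univ)
    (p := fun v : Fin n => v.val < ℓ * (k * 4) + k)
  cases b <;> simp_all <;> omega

lemma not_pxLE_one [Fintype V] (G : SimpleGraph V) {k ℓ : ℕ} (hk : 3 ≤ k)
    (hkV : k ≤ Fintype.card V) (hℓ : 1 ≤ ℓ) : ¬ pxLE G k ℓ 1 := by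
  rintro ⟨c, hc⟩
  obtain ⟨S, -, hS⟩ := Finset.exists_subset_card_eq (s := Finset.univ) (by simpa using hkV)
  obtain ⟨T, hT, -⟩ := hc S hS
  obtain ⟨⟨htree, hST⟩, hproper⟩ := hT ⟨0, hℓ⟩
  have huniq : ∀ u v w, (T ⟨0, hℓ⟩).coe.Adj u v → (T ⟨0, hℓ⟩).coe.Adj u w → v = w := by
    intro u v w huv huw
    by_contra hvw
    exact hproper u v w huv huw (fun h => hvw (Subtype.ext h)) (Subsingleton.elim _ _)
  obtain ⟨a, b, c, ha, hb, hc, hab, hac, hbc⟩ := Finset.two_lt_card_iff.mp (by omega : 2 < #S)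
  rcases htree.1.eq_or_eq_or_eq_of_adj_unique huniq ⟨a, hST ha⟩ ⟨b, hST hb⟩ ⟨c, hST hc⟩ with
    h | h | h <;> simp_all

lemma two_mul_le_of_explicit_bound {k ℓ n : ℕ} (hk : 3 ≤ k) (hl : 1 ≤ ℓ)
    (hn : 2 * (((ℓ * (k - 1) + k : ℝ)) ^ 4 - 1) / ((ℓ + 1) * (k - 1)) - 1 ≤ (n : ℝ)) :
    2 * (ℓ * (k * 4) + k) ≤ n := by
  have hk' : (3 : ℝ) ≤ k := by exact_mod_cast hk
  have hl' : (1 : ℝ) ≤ ℓ := by exact_mod_cast hl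
  set D : ℝ := ℓ * (k - 1) + k with hD
  have hden : 0 < ((ℓ : ℝ) + 1) * (k - 1) := mul_pos (by positivity) (by linarith)
  -- the denominator is `D - 1`, so the bound reads `n ≥ 2 (D³ + D² + D + 1) - 1`
  have hgeom : 2 * (D ^ 4 - 1) / ((ℓ + 1) * (k - 1)) = 2 * (D ^ 3 + D ^ 2 + D + 1) := by
    rw [div_eq_iff hden.ne', hD]
    ring
  have hDk : (k : ℝ) ≤ D := by nlinarith
  have hDl : 2 * (ℓ : ℝ) ≤ D := by nlinarith
  have hD5 : (5 : ℝ) ≤ D := by nlinarith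
  have hcube : 5 * ((k : ℝ) * (2 * ℓ)) ≤ D ^ 3 := by
    have := mul_le_mul hDk hDl (by positivity) (by linarith)
    nlinarith
  rw [hgeom] at hn
  have : (2 * (ℓ * (k * 4) + k) : ℝ) ≤ n := by nlinarith
  exact_mod_cast this

/-- For `k ≥ 3`, `ℓ ≥ 1` and every
`n ≥ 2((ℓ(k−1)+k)^4 − 1)/((ℓ+1)(k−1)) − 1`, we have `px_{k,ℓ}(K_n) = 2`. -/
theorem px_k_ell_complete_explicit (k ℓ n : ℕ) (hk : 3 ≤ k) (hl : 1 ≤ ℓ)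
    (hn : 2 * (((ℓ * (k - 1) + k : ℝ)) ^ 4 - 1) / ((ℓ + 1) * (k - 1)) - 1 ≤ (n : ℝ)) :
    pxEq2 (⊤ : SimpleGraph (Fin n)) k ℓ := by
  have hN := two_mul_le_of_explicit_bound hk hl hn
  exact ⟨pxLE_top_fin_two (by omega) hN, not_pxLE_one _ hk (by simp; omega) hl⟩
end
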